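/- Let u, v, p, q : ℝ³ → ℝ be smooth functions of (t, x, y) and let μ₀, μ₁, μ₂, μ₃ ∈ ℝ. Suppose that at every point p_t = J(u, p) + μ₀·E(u), 0 = J(v, p) + μ₀·E(v) + μ₁·v + μ₂, q_t = J(u, q) + J(Δv, p) + μ₀·E(Δv), and 0 = J(v, q) + J(Δu, p) + μ₀·E(Δu) + μ₁·Δu + μ₃. Then at every point J(G2, p) + μ₀·E(G2) + μ₁·G2 = 0 and J(G2, q) + J(G1, p) + μ₀·E(G1) + μ₁·G1 = 0, where G1 := (Δu)_t − J(u, Δu) + J(v, Δv) and G2 := v_t − J(u, v). Hence this four-parameter system is a Lax representation for the two-dimensional ideal magnetohydrodynamics equations. -/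

import Mathlib

noncomputable section

/-- Partial derivative in `t` of a function of `(t, x, y)`. -/
def pt3 (f : ℝ × ℝ × ℝ → ℝ) (P : ℝ × ℝ × ℝ) : ℝ :=
  deriv (fun w => f (w, P.2.1, P.2.2)) P.1

/-- Partial derivative in `x` of a function of `(t, x, y)`. -/
def px3 (f : ℝ × ℝ × ℝ → ℝ) (P : ℝ × ℝ × ℝ) : ℝ :=
  deriv (fun w => f (P.1, w, P.2.2)) P.2.1

/-- Partial derivative in `y` of a function of `(t, x, y)`. -/
def py3 (f : ℝ × ℝ × ℝ → ℝ) (P : ℝ × ℝ × ℝ) : ℝ :=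
  deriv (fun w => f (P.1, P.2.1, w)) P.2.2

/-- Jacobi bracket `J(f, g) = f_x g_y - f_y g_x`. -/
def J3 (f g : ℝ × ℝ × ℝ → ℝ) : ℝ × ℝ × ℝ → ℝ :=
  fun P => px3 f P * py3 g P - py3 f P * px3 g P

/-- Planar Laplacian `Δf = f_xx + f_yy`. -/
def lap3 (f : ℝ × ℝ × ℝ → ℝ) : ℝ × ℝ × ℝ → ℝ :=
  fun P => px3 (px3 f) P + py3 (py3 f) P

/-- The operator `E(f) = x f_x + y f_y - 2 f`. -/
def Eop3 (f : ℝ × ℝ × ℝ → ℝ) : ℝ × ℝ × ℝ → ℝ :=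
  fun P => P.2.1 * px3 f P + P.2.2 * py3 f P - 2 * f P

/-- `G1 = (Δu)_t - J(u, Δu) + J(v, Δv)`. -/
def G1 (u v : ℝ × ℝ × ℝ → ℝ) : ℝ × ℝ × ℝ → ℝ :=
  fun P => pt3 (lap3 u) P - J3 u (lap3 u) P + J3 v (lap3 v) P

/-- `G2 = v_t - J(u, v)`. -/
def G2 (u v : ℝ × ℝ × ℝ → ℝ) : ℝ × ℝ × ℝ → ℝ :=
  fun P => pt3 v P - J3 u v P

namespace IMHDAux

/-- Directional derivative along `e`. -/
def D (e : ℝ × ℝ × ℝ) (f : ℝ × ℝ × ℝ → ℝ) : ℝ × ℝ × ℝ → ℝ :=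
  fun P => fderiv ℝ f P e

abbrev vt : ℝ × ℝ × ℝ := (1, 0, 0)
abbrev vx : ℝ × ℝ × ℝ := (0, 1, 0)
abbrev vy : ℝ × ℝ × ℝ := (0, 0, 1)

lemma D_smooth (e : ℝ × ℝ × ℝ) {f : ℝ × ℝ × ℝ → ℝ} (hf : ContDiff ℝ (⊤ : ℕ∞) f) :
    ContDiff ℝ (⊤ : ℕ∞) (D e f) :=
  (hf.fderiv_right (by simp)).clm_apply contDiff_const

lemma D_diff (e : ℝ × ℝ × ℝ) {f : ℝ × ℝ × ℝ → ℝ} (hf : ContDiff ℝ (⊤ : ℕ∞) f) :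
    Differentiable ℝ (D e f) :=
  (D_smooth e hf).differentiable (by simp)

lemma D_add {f g : ℝ × ℝ × ℝ → ℝ} (hf : Differentiable ℝ f) (hg : Differentiable ℝ g)
    (e P) : D e (fun Q => f Q + g Q) P = D e f P + D e g P := by
  unfold D
  rw [fderiv_fun_add (hf P) (hg P)]; rfl

lemma D_sub {f g : ℝ × ℝ × ℝ → ℝ} (hf : Differentiable ℝ f) (hg : Differentiable ℝ g)
    (e P) : D e (fun Q => f Q - g Q) P = D e f P - D e g P := by
  unfold D
  rw [fderiv_fun_sub (hf P) (hg P)]; rfl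

lemma D_mul {f g : ℝ × ℝ × ℝ → ℝ} (hf : Differentiable ℝ f) (hg : Differentiable ℝ g)
    (e P) : D e (fun Q => f Q * g Q) P = D e f P * g P + f P * D e g P := by
  unfold D
  rw [fderiv_fun_mul (hf P) (hg P)]
  simp only [ContinuousLinearMap.add_apply, ContinuousLinearMap.smul_apply, smul_eq_mul]
  ring

lemma D_const (e : ℝ × ℝ × ℝ) (c : ℝ) (P) : D e (fun _ : ℝ × ℝ × ℝ => c) P = 0 := by
  simp [D]

lemma D_cmul {f : ℝ × ℝ × ℝ → ℝ} (hf : Differentiable ℝ f) (c : ℝ)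
    (e P) : D e (fun Q => c * f Q) P = c * D e f P := by
  unfold D
  rw [fderiv_const_mul (hf P)]; rfl

lemma D_coordx (e P) : D e (fun Q : ℝ × ℝ × ℝ => Q.2.1) P = e.2.1 := by
  have h : HasFDerivAt (fun Q : ℝ × ℝ × ℝ => Q.2.1)
      ((ContinuousLinearMap.fst ℝ ℝ ℝ).comp (ContinuousLinearMap.snd ℝ ℝ (ℝ × ℝ))) P :=
    ((ContinuousLinearMap.fst ℝ ℝ ℝ).comp (ContinuousLinearMap.snd ℝ ℝ (ℝ × ℝ))).hasFDerivAt
  simp [D, h.fderiv]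

lemma D_coordy (e P) : D e (fun Q : ℝ × ℝ × ℝ => Q.2.2) P = e.2.2 := by
  have h : HasFDerivAt (fun Q : ℝ × ℝ × ℝ => Q.2.2)
      ((ContinuousLinearMap.snd ℝ ℝ ℝ).comp (ContinuousLinearMap.snd ℝ ℝ (ℝ × ℝ))) P :=
    ((ContinuousLinearMap.snd ℝ ℝ ℝ).comp (ContinuousLinearMap.snd ℝ ℝ (ℝ × ℝ))).hasFDerivAt
  simp [D, h.fderiv]

lemma D_comm {f : ℝ × ℝ × ℝ → ℝ} (hf : ContDiff ℝ (⊤ : ℕ∞) f) (a b P) :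
    D a (D b f) P = D b (D a f) P := by
  have hsym : IsSymmSndFDerivAt ℝ f P :=
    hf.contDiffAt.isSymmSndFDerivAt (by rw [minSmoothness_of_isRCLikeNormedField]; exact WithTop.coe_le_coe.mpr le_top)
  have hd : DifferentiableAt ℝ (fderiv ℝ f) P :=
    ((hf.fderiv_right (m := 1) (WithTop.coe_le_coe.mpr le_top)).differentiable one_ne_zero) P
  have expand : ∀ c d : ℝ × ℝ × ℝ, D c (D d f) P = (fderiv ℝ (fderiv ℝ f) P c) d := by
    intro c d
    have h0 : D c (D d f) P = fderiv ℝ (fun Q => (fderiv ℝ f Q) d) P c := rfl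
    rw [h0, fderiv_clm_apply hd (differentiableAt_const d)]
    simp
  rw [expand, expand, hsym a b]

/-! Conversions of `pt3/px3/py3` to `D`. -/

lemma pt3_eq {f : ℝ × ℝ × ℝ → ℝ} (hf : Differentiable ℝ f) (P) :
    pt3 f P = D vt f P := by
  have hL : HasDerivAt (fun w : ℝ => (w, P.2.1, P.2.2)) ((1:ℝ), (0:ℝ), (0:ℝ)) P.1 :=
    (hasDerivAt_id P.1).prodMk ((hasDerivAt_const _ _).prodMk (hasDerivAt_const _ _))
  exact ((hf P).hasFDerivAt.comp_hasDerivAt P.1 hL).deriv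

lemma px3_eq {f : ℝ × ℝ × ℝ → ℝ} (hf : Differentiable ℝ f) (P) :
    px3 f P = D vx f P := by
  have hL : HasDerivAt (fun w : ℝ => (P.1, w, P.2.2)) ((0:ℝ), (1:ℝ), (0:ℝ)) P.2.1 :=
    (hasDerivAt_const _ _).prodMk ((hasDerivAt_id _).prodMk (hasDerivAt_const _ _))
  exact ((hf P).hasFDerivAt.comp_hasDerivAt P.2.1 hL).deriv

lemma py3_eq {f : ℝ × ℝ × ℝ → ℝ} (hf : Differentiable ℝ f) (P) :
    py3 f P = D vy f P := by
  have hL : HasDerivAt (fun w : ℝ => (P.1, P.2.1, w)) ((0:ℝ), (0:ℝ), (1:ℝ)) P.2.2 :=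
    (hasDerivAt_const _ _).prodMk ((hasDerivAt_const _ _).prodMk (hasDerivAt_id _))
  exact ((hf P).hasFDerivAt.comp_hasDerivAt P.2.2 hL).deriv

/-! The `D`-versions of the operators. -/

def Jd (f g : ℝ × ℝ × ℝ → ℝ) : ℝ × ℝ × ℝ → ℝ :=
  fun P => D vx f P * D vy g P - D vy f P * D vx g P

def Ed (f : ℝ × ℝ × ℝ → ℝ) : ℝ × ℝ × ℝ → ℝ :=
  fun P => P.2.1 * D vx f P + P.2.2 * D vy f P - 2 * f P

lemma Jd_smooth {f g : ℝ × ℝ × ℝ → ℝ} (hf : ContDiff ℝ (⊤ : ℕ∞) f) (hg : ContDiff ℝ (⊤ : ℕ∞) g) :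
    ContDiff ℝ (⊤ : ℕ∞) (Jd f g) :=
  ((D_smooth vx hf).mul (D_smooth vy hg)).sub ((D_smooth vy hf).mul (D_smooth vx hg))

lemma Ed_smooth {f : ℝ × ℝ × ℝ → ℝ} (hf : ContDiff ℝ (⊤ : ℕ∞) f) :
    ContDiff ℝ (⊤ : ℕ∞) (Ed f) :=
  ((contDiff_snd.fst.mul (D_smooth vx hf)).add (contDiff_snd.snd.mul (D_smooth vy hf))).sub
    (contDiff_const.mul hf)

lemma Jd_diff {f g : ℝ × ℝ × ℝ → ℝ} (hf : ContDiff ℝ (⊤ : ℕ∞) f) (hg : ContDiff ℝ (⊤ : ℕ∞) g) :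
    Differentiable ℝ (Jd f g) := (Jd_smooth hf hg).differentiable (by simp)

lemma Ed_diff {f : ℝ × ℝ × ℝ → ℝ} (hf : ContDiff ℝ (⊤ : ℕ∞) f) :
    Differentiable ℝ (Ed f) := (Ed_smooth hf).differentiable (by simp)

lemma J3_eq {f g : ℝ × ℝ × ℝ → ℝ} (hf : Differentiable ℝ f) (hg : Differentiable ℝ g) :
    J3 f g = Jd f g := by
  funext P
  show px3 f P * py3 g P - py3 f P * px3 g P = _
  rw [px3_eq hf, py3_eq hg, py3_eq hf, px3_eq hg]; rfl

lemma Eop3_eq {f : ℝ × ℝ × ℝ → ℝ} (hf : Differentiable ℝ f) :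
    Eop3 f = Ed f := by
  funext P
  show P.2.1 * px3 f P + P.2.2 * py3 f P - 2 * f P = _
  rw [px3_eq hf, py3_eq hf]; rfl

lemma lap3_eq {f : ℝ × ℝ × ℝ → ℝ} (hf : ContDiff ℝ (⊤ : ℕ∞) f) :
    lap3 f = fun P => D vx (D vx f) P + D vy (D vy f) P := by
  funext P
  show px3 (px3 f) P + py3 (py3 f) P = _
  have h1 : px3 f = D vx f := funext (px3_eq (hf.differentiable (by simp)))
  have h2 : py3 f = D vy f := funext (py3_eq (hf.differentiable (by simp)))
  rw [h1, h2, px3_eq (D_diff vx hf), py3_eq (D_diff vy hf)]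

end IMHDAux
namespace IMHDAux

variable {f g h : ℝ × ℝ × ℝ → ℝ}

lemma D_Jd (hf : ContDiff ℝ (⊤ : ℕ∞) f) (hg : ContDiff ℝ (⊤ : ℕ∞) g) (e P) :
    D e (Jd f g) P = Jd (D e f) g P + Jd f (D e g) P := by
  have h1 : Differentiable ℝ (fun Q => D vx f Q * D vy g Q) :=
    (D_diff vx hf).mul (D_diff vy hg)
  have h2 : Differentiable ℝ (fun Q => D vy f Q * D vx g Q) :=
    (D_diff vy hf).mul (D_diff vx hg)
  show D e (fun Q => D vx f Q * D vy g Q - D vy f Q * D vx g Q) P = _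
  rw [D_sub h1 h2, D_mul (D_diff vx hf) (D_diff vy hg), D_mul (D_diff vy hf) (D_diff vx hg),
    D_comm hf e vx P, D_comm hf e vy P, D_comm hg e vx P, D_comm hg e vy P]
  simp only [Jd]
  ring

lemma coordx_diff : Differentiable ℝ (fun Q : ℝ × ℝ × ℝ => Q.2.1) :=
  differentiable_snd.fst

lemma coordy_diff : Differentiable ℝ (fun Q : ℝ × ℝ × ℝ => Q.2.2) :=
  differentiable_snd.snd

lemma D_Ed_aux (hf : ContDiff ℝ (⊤ : ℕ∞) f) (e P) :
    D e (Ed f) P = e.2.1 * D vx f P + e.2.2 * D vy f P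
      + P.2.1 * D vx (D e f) P + P.2.2 * D vy (D e f) P - 2 * D e f P := by
  have h1 : Differentiable ℝ (fun Q : ℝ × ℝ × ℝ => Q.2.1 * D vx f Q) :=
    coordx_diff.mul (D_diff vx hf)
  have h2 : Differentiable ℝ (fun Q : ℝ × ℝ × ℝ => Q.2.2 * D vy f Q) :=
    coordy_diff.mul (D_diff vy hf)
  show D e (fun Q => Q.2.1 * D vx f Q + Q.2.2 * D vy f Q - 2 * f Q) P = _
  rw [D_sub (h1.fun_add h2) (differentiable_const (2:ℝ) |>.fun_mul (hf.differentiable (by simp))),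
    D_add h1 h2, D_mul coordx_diff (D_diff vx hf), D_mul coordy_diff (D_diff vy hf),
    D_mul (differentiable_const (2:ℝ)) (hf.differentiable (by simp)),
    D_const, D_coordx, D_coordy,
    D_comm hf e vx P, D_comm hf e vy P]
  ring

lemma Dt_Ed (hf : ContDiff ℝ (⊤ : ℕ∞) f) (P) : D vt (Ed f) P = Ed (D vt f) P := by
  rw [D_Ed_aux hf vt P]
  show _ = P.2.1 * D vx (D vt f) P + P.2.2 * D vy (D vt f) P - 2 * D vt f P
  norm_num

lemma Dx_Ed (hf : ContDiff ℝ (⊤ : ℕ∞) f) (P) : D vx (Ed f) P = Ed (D vx f) P + D vx f P := by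
  rw [D_Ed_aux hf vx P]
  show _ = P.2.1 * D vx (D vx f) P + P.2.2 * D vy (D vx f) P - 2 * D vx f P + D vx f P
  norm_num; ring

lemma Dy_Ed (hf : ContDiff ℝ (⊤ : ℕ∞) f) (P) : D vy (Ed f) P = Ed (D vy f) P + D vy f P := by
  rw [D_Ed_aux hf vy P]
  show _ = P.2.1 * D vx (D vy f) P + P.2.2 * D vy (D vy f) P - 2 * D vy f P + D vy f P
  norm_num; ring

lemma Ed_Jd (hf : ContDiff ℝ (⊤ : ℕ∞) f) (hg : ContDiff ℝ (⊤ : ℕ∞) g) (P) :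
    Ed (Jd f g) P = Jd (Ed f) g P + Jd f (Ed g) P := by
  show P.2.1 * D vx (Jd f g) P + P.2.2 * D vy (Jd f g) P - 2 * Jd f g P = _
  rw [D_Jd hf hg vx P, D_Jd hf hg vy P]
  show _ = (D vx (Ed f) P * D vy g P - D vy (Ed f) P * D vx g P)
    + (D vx f P * D vy (Ed g) P - D vy f P * D vx (Ed g) P)
  rw [Dx_Ed hf P, Dy_Ed hf P, Dx_Ed hg P, Dy_Ed hg P]
  simp only [Jd, Ed]
  rw [D_comm hf vy vx P, D_comm hg vy vx P]
  ring

lemma Jd_jacobi (hf : ContDiff ℝ (⊤ : ℕ∞) f) (hg : ContDiff ℝ (⊤ : ℕ∞) g) (hh : ContDiff ℝ (⊤ : ℕ∞) h) (P) :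
    Jd (Jd f g) h P = Jd f (Jd g h) P - Jd g (Jd f h) P := by
  show D vx (Jd f g) P * D vy h P - D vy (Jd f g) P * D vx h P = _
  rw [D_Jd hf hg vx P, D_Jd hf hg vy P]
  show _ = (D vx f P * D vy (Jd g h) P - D vy f P * D vx (Jd g h) P)
    - (D vx g P * D vy (Jd f h) P - D vy g P * D vx (Jd f h) P)
  rw [D_Jd hg hh vx P, D_Jd hg hh vy P, D_Jd hf hh vx P, D_Jd hf hh vy P]
  simp only [Jd]
  rw [D_comm hf vy vx P, D_comm hg vy vx P, D_comm hh vy vx P]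
  ring

lemma Jd_add_right (hg : Differentiable ℝ g) (hh : Differentiable ℝ h) (f P) :
    Jd f (fun Q => g Q + h Q) P = Jd f g P + Jd f h P := by
  simp only [Jd, D_add hg hh]; ring

lemma Jd_cmul_right (hg : Differentiable ℝ g) (f : ℝ × ℝ × ℝ → ℝ) (c : ℝ) (P) :
    Jd f (fun Q => c * g Q) P = c * Jd f g P := by
  simp only [Jd, D_cmul hg]; ring

lemma Jd_const_right (f : ℝ × ℝ × ℝ → ℝ) (c : ℝ) (P) : Jd f (fun _ => c) P = 0 := by
  simp [Jd, D_const]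

lemma Jd_swap (f g P) : Jd f g P = -Jd g f P := by
  simp only [Jd]; ring

lemma Jd_sub_left (hf : Differentiable ℝ f) (hg : Differentiable ℝ g) (h P) :
    Jd (fun Q => f Q - g Q) h P = Jd f h P - Jd g h P := by
  simp only [Jd, D_sub hf hg]; ring

lemma Jd_add_left (hf : Differentiable ℝ f) (hg : Differentiable ℝ g) (h P) :
    Jd (fun Q => f Q + g Q) h P = Jd f h P + Jd g h P := by
  simp only [Jd, D_add hf hg]; ring

lemma Ed_sub (hf : Differentiable ℝ f) (hg : Differentiable ℝ g) (P) :
    Ed (fun Q => f Q - g Q) P = Ed f P - Ed g P := by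
  simp only [Ed, D_sub hf hg]; ring

lemma Ed_add (hf : Differentiable ℝ f) (hg : Differentiable ℝ g) (P) :
    Ed (fun Q => f Q + g Q) P = Ed f P + Ed g P := by
  simp only [Ed, D_add hf hg]; ring

end IMHDAux

namespace IMHDAux

def lapd (f : ℝ × ℝ × ℝ → ℝ) : ℝ × ℝ × ℝ → ℝ :=
  fun P => D vx (D vx f) P + D vy (D vy f) P

lemma lapd_smooth {f : ℝ × ℝ × ℝ → ℝ} (hf : ContDiff ℝ (⊤ : ℕ∞) f) : ContDiff ℝ (⊤ : ℕ∞) (lapd f) :=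
  (D_smooth vx (D_smooth vx hf)).add (D_smooth vy (D_smooth vy hf))

lemma lap3_eq' {f : ℝ × ℝ × ℝ → ℝ} (hf : ContDiff ℝ (⊤ : ℕ∞) f) : lap3 f = lapd f :=
  lap3_eq hf

end IMHDAux

open IMHDAux

theorem imhd_four_parameter_covering_compatibility
    (u v p q : ℝ × ℝ × ℝ → ℝ) (m0 m1 m2 m3 : ℝ)
    (hu : ContDiff ℝ (⊤ : ℕ∞) u) (hv : ContDiff ℝ (⊤ : ℕ∞) v)
    (hp : ContDiff ℝ (⊤ : ℕ∞) p) (hq : ContDiff ℝ (⊤ : ℕ∞) q)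
    (hpt : ∀ P, pt3 p P = J3 u p P + m0 * Eop3 u P)
    (hpz : ∀ P, (0 : ℝ) = J3 v p P + m0 * Eop3 v P + m1 * v P + m2)
    (hqt : ∀ P, pt3 q P = J3 u q P + J3 (lap3 v) p P + m0 * Eop3 (lap3 v) P)
    (hqz : ∀ P, (0 : ℝ) = J3 v q P + J3 (lap3 u) p P + m0 * Eop3 (lap3 u) P
      + m1 * lap3 u P + m3) :
    (∀ P, J3 (G2 u v) p P + m0 * Eop3 (G2 u v) P + m1 * G2 u v P = 0) ∧
    (∀ P, J3 (G2 u v) q P + J3 (G1 u v) p P + m0 * Eop3 (G1 u v) P + m1 * G1 u v P = 0) := by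
  have hud : Differentiable ℝ u := hu.differentiable (by simp)
  have hvd : Differentiable ℝ v := hv.differentiable (by simp)
  have hpd : Differentiable ℝ p := hp.differentiable (by simp)
  have hqd : Differentiable ℝ q := hq.differentiable (by simp)
  have hlus : ContDiff ℝ (⊤ : ℕ∞) (lapd u) := lapd_smooth hu
  have hlvs : ContDiff ℝ (⊤ : ℕ∞) (lapd v) := lapd_smooth hv
  have hlud : Differentiable ℝ (lapd u) := hlus.differentiable (by simp)
  have hlvd : Differentiable ℝ (lapd v) := hlvs.differentiable (by simp)
  have hlu : lap3 u = lapd u := lap3_eq' hu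
  have hlv : lap3 v = lapd v := lap3_eq' hv
  -- converted structure functions
  have hG2f : G2 u v = fun Q => D vt v Q - Jd u v Q := by
    funext Q
    show pt3 v Q - J3 u v Q = _
    rw [pt3_eq hvd, J3_eq hud hvd]
  have hG2s : ContDiff ℝ (⊤ : ℕ∞) (fun Q => D vt v Q - Jd u v Q) :=
    (D_smooth vt hv).sub (Jd_smooth hu hv)
  have hG2d : Differentiable ℝ (fun Q => D vt v Q - Jd u v Q) := hG2s.differentiable (by simp)
  have hG1f : G1 u v = fun Q => D vt (lapd u) Q - Jd u (lapd u) Q + Jd v (lapd v) Q := by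
    funext Q
    show pt3 (lap3 u) Q - J3 u (lap3 u) Q + J3 v (lap3 v) Q = _
    rw [hlu, hlv, pt3_eq hlud, J3_eq hud hlud, J3_eq hvd hlvd]
  have hG1s : ContDiff ℝ (⊤ : ℕ∞) (fun Q => D vt (lapd u) Q - Jd u (lapd u) Q + Jd v (lapd v) Q) :=
    ((D_smooth vt hlus).sub (Jd_smooth hu hlus)).add (Jd_smooth hv hlvs)
  have hG1d : Differentiable ℝ (fun Q => D vt (lapd u) Q - Jd u (lapd u) Q + Jd v (lapd v) Q) :=
    hG1s.differentiable (by simp)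
  -- converted hypotheses
  have hpt' : D vt p = fun Q => Jd u p Q + m0 * Ed u Q := by
    funext Q
    rw [← pt3_eq hpd Q, hpt Q, J3_eq hud hpd, Eop3_eq hud]
  have hW : (fun Q => Jd v p Q + m0 * Ed v Q + m1 * v Q) = fun _ : ℝ × ℝ × ℝ => -m2 := by
    funext Q
    have h := hpz Q
    rw [J3_eq hvd hpd, Eop3_eq hvd] at h
    linarith
  have hqt' : D vt q = fun Q => Jd u q Q + Jd (lapd v) p Q + m0 * Ed (lapd v) Q := by
    funext Q
    rw [← pt3_eq hqd Q, hqt Q, hlv, J3_eq hud hqd, J3_eq hlvd hpd, Eop3_eq hlvd]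
  have hW2 : (fun Q => Jd v q Q + Jd (lapd u) p Q + m0 * Ed (lapd u) Q + m1 * lapd u Q)
      = fun _ : ℝ × ℝ × ℝ => -m3 := by
    funext Q
    have h := hqz Q
    rw [hlu, J3_eq hvd hqd, J3_eq hlud hpd, Eop3_eq hlud] at h
    linarith
  constructor
  · -- Part 1
    intro P
    rw [hG2f, J3_eq hG2d hpd, Eop3_eq hG2d]
    have hA : Jd (fun Q => D vt v Q - Jd u v Q) p P = Jd (D vt v) p P - Jd (Jd u v) p P :=
      Jd_sub_left (D_diff vt hv) (Jd_diff hu hv) p P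
    have hB : Ed (fun Q => D vt v Q - Jd u v Q) P = Ed (D vt v) P - Ed (Jd u v) P :=
      Ed_sub (D_diff vt hv) (Jd_diff hu hv) P
    have d1 : Differentiable ℝ (fun Q => Jd v p Q + m0 * Ed v Q) :=
      (Jd_diff hv hp).add ((Ed_diff hv).const_mul m0)
    have h1 : D vt (fun Q => Jd v p Q + m0 * Ed v Q + m1 * v Q) P = 0 := by
      rw [hW]; exact D_const _ _ _
    have h2 : D vt (fun Q => Jd v p Q + m0 * Ed v Q + m1 * v Q) P
        = Jd (D vt v) p P + Jd v (D vt p) P + m0 * Ed (D vt v) P + m1 * D vt v P := by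
      rw [D_add d1 (hvd.const_mul m1), D_add (Jd_diff hv hp) ((Ed_diff hv).const_mul m0),
        D_cmul (Ed_diff hv) m0, D_cmul hvd m1, D_Jd hv hp vt P, Dt_Ed hv P]
      try ring
    have E1 : Jd (D vt v) p P + Jd v (D vt p) P + m0 * Ed (D vt v) P + m1 * D vt v P = 0 :=
      h2.symm.trans h1
    have E2 : Jd v (D vt p) P = Jd v (Jd u p) P + m0 * Jd v (Ed u) P := by
      rw [hpt', Jd_add_right (Jd_diff hu hp) ((Ed_diff hu).const_mul m0),
        Jd_cmul_right (Ed_diff hu)]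
    have E3 := Jd_jacobi hu hv hp P
    have E4 := Ed_Jd hu hv P
    have E5 := Jd_swap (Ed u) v P
    have h3 : Jd u (fun Q => Jd v p Q + m0 * Ed v Q + m1 * v Q) P = 0 := by
      rw [hW]; exact Jd_const_right _ _ _
    have h4 : Jd u (fun Q => Jd v p Q + m0 * Ed v Q + m1 * v Q) P
        = Jd u (Jd v p) P + m0 * Jd u (Ed v) P + m1 * Jd u v P := by
      rw [Jd_add_right d1 (hvd.const_mul m1), Jd_add_right (Jd_diff hv hp)
        ((Ed_diff hv).const_mul m0), Jd_cmul_right (Ed_diff hv), Jd_cmul_right hvd]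
    have E6 : Jd u (Jd v p) P + m0 * Jd u (Ed v) P + m1 * Jd u v P = 0 := h4.symm.trans h3
    rw [hA, hB]
    beta_reduce
    linear_combination E1 - E2 - E3 - m0 * E4 - m0 * E5 - E6
  · -- Part 2
    intro P
    rw [hG2f, hG1f, J3_eq hG2d hqd, J3_eq hG1d hpd, Eop3_eq hG1d]
    have hA : Jd (fun Q => D vt v Q - Jd u v Q) q P = Jd (D vt v) q P - Jd (Jd u v) q P :=
      Jd_sub_left (D_diff vt hv) (Jd_diff hu hv) q P
    have hB : Jd (fun Q => D vt (lapd u) Q - Jd u (lapd u) Q + Jd v (lapd v) Q) p P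
        = Jd (D vt (lapd u)) p P - Jd (Jd u (lapd u)) p P + Jd (Jd v (lapd v)) p P := by
      rw [Jd_add_left ((D_diff vt hlus).fun_sub (Jd_diff hu hlus)) (Jd_diff hv hlvs),
        Jd_sub_left (D_diff vt hlus) (Jd_diff hu hlus)]
    have hC : Ed (fun Q => D vt (lapd u) Q - Jd u (lapd u) Q + Jd v (lapd v) Q) P
        = Ed (D vt (lapd u)) P - Ed (Jd u (lapd u)) P + Ed (Jd v (lapd v)) P := by
      rw [Ed_add ((D_diff vt hlus).fun_sub (Jd_diff hu hlus)) (Jd_diff hv hlvs),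
        Ed_sub (D_diff vt hlus) (Jd_diff hu hlus)]
    have d_a : Differentiable ℝ (fun Q => Jd v q Q + Jd (lapd u) p Q) :=
      (Jd_diff hv hq).add (Jd_diff hlus hp)
    have d_b : Differentiable ℝ (fun Q => Jd v q Q + Jd (lapd u) p Q + m0 * Ed (lapd u) Q) :=
      d_a.add ((Ed_diff hlus).const_mul m0)
    have h1 : D vt (fun Q => Jd v q Q + Jd (lapd u) p Q + m0 * Ed (lapd u) Q
        + m1 * lapd u Q) P = 0 := by
      rw [hW2]; exact D_const _ _ _
    have h2 : D vt (fun Q => Jd v q Q + Jd (lapd u) p Q + m0 * Ed (lapd u) Q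
        + m1 * lapd u Q) P
        = Jd (D vt v) q P + Jd v (D vt q) P + Jd (D vt (lapd u)) p P
          + Jd (lapd u) (D vt p) P + m0 * Ed (D vt (lapd u)) P + m1 * D vt (lapd u) P := by
      rw [D_add d_b (hlud.const_mul m1), D_add d_a ((Ed_diff hlus).const_mul m0),
        D_add (Jd_diff hv hq) (Jd_diff hlus hp), D_cmul (Ed_diff hlus) m0,
        D_cmul hlud m1, D_Jd hv hq vt P, D_Jd hlus hp vt P, Dt_Ed hlus P]
      try ring
    have F1 : Jd (D vt v) q P + Jd v (D vt q) P + Jd (D vt (lapd u)) p P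
        + Jd (lapd u) (D vt p) P + m0 * Ed (D vt (lapd u)) P + m1 * D vt (lapd u) P = 0 :=
      h2.symm.trans h1
    have F2 : Jd v (D vt q) P
        = Jd v (Jd u q) P + Jd v (Jd (lapd v) p) P + m0 * Jd v (Ed (lapd v)) P := by
      rw [hqt', Jd_add_right ((Jd_diff hu hq).fun_add (Jd_diff hlvs hp))
        ((Ed_diff hlvs).const_mul m0), Jd_add_right (Jd_diff hu hq) (Jd_diff hlvs hp),
        Jd_cmul_right (Ed_diff hlvs)]
    have F3 : Jd (lapd u) (D vt p) P
        = Jd (lapd u) (Jd u p) P + m0 * Jd (lapd u) (Ed u) P := by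
      rw [hpt', Jd_add_right (Jd_diff hu hp) ((Ed_diff hu).const_mul m0),
        Jd_cmul_right (Ed_diff hu)]
    have F4 := Jd_jacobi hu hv hq P
    have F5 := Jd_jacobi hu hlus hp P
    have F6 := Jd_jacobi hv hlvs hp P
    have F7 := Ed_Jd hu hlus P
    have F8 := Ed_Jd hv hlvs P
    have F9 := Jd_swap (Ed u) (lapd u) P
    have F10 := Jd_swap (Ed v) (lapd v) P
    have h3 : Jd u (fun Q => Jd v q Q + Jd (lapd u) p Q + m0 * Ed (lapd u) Q
        + m1 * lapd u Q) P = 0 := by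
      rw [hW2]; exact Jd_const_right _ _ _
    have h4 : Jd u (fun Q => Jd v q Q + Jd (lapd u) p Q + m0 * Ed (lapd u) Q
        + m1 * lapd u Q) P
        = Jd u (Jd v q) P + Jd u (Jd (lapd u) p) P + m0 * Jd u (Ed (lapd u)) P
          + m1 * Jd u (lapd u) P := by
      rw [Jd_add_right d_b (hlud.const_mul m1), Jd_add_right d_a
        ((Ed_diff hlus).const_mul m0), Jd_add_right (Jd_diff hv hq) (Jd_diff hlus hp),
        Jd_cmul_right (Ed_diff hlus), Jd_cmul_right hlud]
    have F11 : Jd u (Jd v q) P + Jd u (Jd (lapd u) p) P + m0 * Jd u (Ed (lapd u)) P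
        + m1 * Jd u (lapd u) P = 0 := h4.symm.trans h3
    have d1 : Differentiable ℝ (fun Q => Jd v p Q + m0 * Ed v Q) :=
      (Jd_diff hv hp).add ((Ed_diff hv).const_mul m0)
    have h5 : Jd (lapd v) (fun Q => Jd v p Q + m0 * Ed v Q + m1 * v Q) P = 0 := by
      rw [hW]; exact Jd_const_right _ _ _
    have h6 : Jd (lapd v) (fun Q => Jd v p Q + m0 * Ed v Q + m1 * v Q) P
        = Jd (lapd v) (Jd v p) P + m0 * Jd (lapd v) (Ed v) P + m1 * Jd (lapd v) v P := by
      rw [Jd_add_right d1 (hvd.const_mul m1), Jd_add_right (Jd_diff hv hp)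
        ((Ed_diff hv).const_mul m0), Jd_cmul_right (Ed_diff hv), Jd_cmul_right hvd]
    have F12 : Jd (lapd v) (Jd v p) P + m0 * Jd (lapd v) (Ed v) P
        + m1 * Jd (lapd v) v P = 0 := h6.symm.trans h5
    have F13 := Jd_swap (lapd v) v P
    rw [hA, hB, hC]
    beta_reduce
    linear_combination F1 - F2 - F3 - F4 - F5 + F6 - m0 * F7 + m0 * F8 - m0 * F9
      + m0 * F10 - F11 - F12 + m1 * F13
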